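/- The h-polynomial of the Hochschild lattice of size n ≥ 2, defined as ∑_u y^{out(u)} where out(u) is the number of elements covering the triword u, equals (y+1)^{n−2} · (y² + (n+1)y + 1). -/
import Mathlib

open Polynomial

def IsTriword {n : ℕ} (u : Fin n → Fin 3) : Prop :=
  (∀ i : Fin n, (i : ℕ) = 0 → u i ≠ 2) ∧
  ∀ i j : Fin n, i < j → u i = 0 → u j ≠ 1

instance {n : ℕ} : DecidablePred (@IsTriword n) := fun u => by
  unfold IsTriword; infer_instance

abbrev Triword (n : ℕ) := {u : Fin n → Fin 3 // IsTriword u}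

/- ## auxiliary development -/

lemma fin3cases : ∀ a : Fin 3, a = 0 ∨ a = 1 ∨ a = 2 := by decide

/-- weight of one coordinate for the out-degree count -/
def cf (n : ℕ) (j : Fin n) (v : Fin 3) : ℕ :=
  if (j : ℕ) = 0 then (if v = 0 then 1 else 0) else (if v = 2 then 0 else 1)

/-- out-degree of a triword -/
def outCount {n : ℕ} (u : Fin n → Fin 3) : ℕ := ∑ j, cf n j (u j)

/-- predicate: coordinate j can be increased -/
def canUp {n : ℕ} (u : Fin n → Fin 3) (j : Fin n) : Prop :=
  ((j : ℕ) = 0 ∧ u j = 0) ∨ ((j : ℕ) ≠ 0 ∧ u j ≠ 2)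

instance {n : ℕ} (u : Fin n → Fin 3) : DecidablePred (canUp u) := fun j => by
  unfold canUp; infer_instance

lemma cf_eq_ite {n : ℕ} (u : Fin n → Fin 3) (j : Fin n) :
    cf n j (u j) = if canUp u j then 1 else 0 := by
  unfold cf canUp
  by_cases h : (j : ℕ) = 0 <;> by_cases h2 : u j = 0 <;> by_cases h3 : u j = 2 <;>
    simp_all

lemma outCount_eq_card {n : ℕ} (u : Fin n → Fin 3) :
    outCount u = Fintype.card {j : Fin n // canUp u j} := by
  rw [Fintype.card_subtype, Finset.card_filter]
  unfold outCount
  exact Finset.sum_congr rfl fun j _ => cf_eq_ite u j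

def succVal {n : ℕ} (u : Fin n → Fin 3) (j : Fin n) : Fin 3 :=
  if u j = 1 then 2 else if (j : ℕ) ≠ 0 ∧ ∃ i, i < j ∧ u i = 0 then 2 else 1

def succAt {n : ℕ} (u : Fin n → Fin 3) (j : Fin n) : Fin n → Fin 3 :=
  Function.update u j (succVal u j)

lemma lt_succVal {n : ℕ} {u : Fin n → Fin 3} {j : Fin n} (hj : canUp u j) :
    u j < succVal u j := by
  unfold succVal
  rcases fin3cases (u j) with h | h | h <;> rw [h]
  · split
    · rename_i hh; exact absurd hh (by decide)
    · split
      · decide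
      · decide
  · simp
  · rcases hj with ⟨h0, hv⟩ | ⟨h0, hv⟩
    · rw [h] at hv; exact absurd hv (by decide)
    · exact absurd h hv

lemma succAt_apply_ne {n : ℕ} (u : Fin n → Fin 3) {j i : Fin n} (h : i ≠ j) :
    succAt u j i = u i := Function.update_of_ne h _ u

lemma succAt_apply_self {n : ℕ} (u : Fin n → Fin 3) (j : Fin n) :
    succAt u j j = succVal u j := Function.update_self j _ u

lemma succVal_ne_zero {n : ℕ} (u : Fin n → Fin 3) (j : Fin n) : succVal u j ≠ 0 := by
  unfold succVal
  split
  · decide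
  · split <;> decide

lemma succVal_of_zero {n : ℕ} {u : Fin n → Fin 3} {j : Fin n} (h0 : (j : ℕ) = 0)
    (hj : canUp u j) : succVal u j = 1 := by
  rcases hj with ⟨_, hv⟩ | ⟨hv, _⟩
  · unfold succVal
    rw [if_neg (by rw [hv]; decide), if_neg (by rintro ⟨hh, -⟩; exact hh h0)]
  · exact absurd h0 hv

lemma succAt_tri {n : ℕ} {u : Fin n → Fin 3} (hu : IsTriword u) {j : Fin n}
    (hj : canUp u j) : IsTriword (succAt u j) := by
  constructor
  · intro i hi0
    by_cases hij : i = j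
    · subst hij
      rw [succAt_apply_self, succVal_of_zero hi0 hj]
      decide
    · rw [succAt_apply_ne u hij]; exact hu.1 i hi0
  · intro i l hil hi hl
    have hine : i ≠ j := by
      intro hh; subst hh
      rw [succAt_apply_self] at hi
      exact succVal_ne_zero u i hi
    rw [succAt_apply_ne u hine] at hi
    by_cases hlj : l = j
    · subst hlj
      rw [succAt_apply_self] at hl
      unfold succVal at hl
      split at hl
      · exact absurd hl (by decide)
      · rw [if_pos ⟨fun hh => by simp [Fin.lt_def, hh] at hil, ⟨i, hil, hi⟩⟩] at hl
        exact absurd hl (by decide)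
    · rw [succAt_apply_ne u hlj] at hl
      exact hu.2 i l hil hi hl

lemma le_succAt {n : ℕ} {u : Fin n → Fin 3} {j : Fin n} (hj : canUp u j) :
    u ≤ succAt u j := by
  intro i
  by_cases hij : i = j
  · subst hij; rw [succAt_apply_self]; exact (lt_succVal hj).le
  · rw [succAt_apply_ne u hij]

lemma covBy_succAt {n : ℕ} (u : Triword n) {j : Fin n} (hj : canUp u.1 j) :
    u ⋖ (⟨succAt u.1 j, succAt_tri u.2 hj⟩ : Triword n) := by
  have hlt : u < (⟨succAt u.1 j, succAt_tri u.2 hj⟩ : Triword n) := by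
    rw [← Subtype.coe_lt_coe, Pi.lt_def]
    refine ⟨le_succAt hj, j, ?_⟩
    show u.1 j < succAt u.1 j j
    rw [succAt_apply_self]; exact lt_succVal hj
  refine ⟨hlt, fun c hc1 hc2 => ?_⟩
  rw [← Subtype.coe_lt_coe, Pi.lt_def] at hc1 hc2
  have hc2' : (c.1 ≤ succAt u.1 j) ∧ ∃ i, c.1 i < succAt u.1 j i := hc2
  have hagree : ∀ i, i ≠ j → c.1 i = u.1 i := fun i hij =>
    le_antisymm (by have := hc2'.1 i; rwa [succAt_apply_ne u.1 hij] at this) (hc1.1 i)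
  obtain ⟨i2, hi2⟩ := hc2'.2
  have hi2j : i2 = j := by
    by_contra hh
    rw [hagree i2 hh, succAt_apply_ne u.1 hh] at hi2
    exact lt_irrefl _ hi2
  subst hi2j
  rw [succAt_apply_self] at hi2
  have huc : u.1 i2 < c.1 i2 := by
    obtain ⟨i1, hi1⟩ := hc1.2
    have hi1j : i1 = i2 := by
      by_contra hh
      rw [hagree i1 hh] at hi1
      exact lt_irrefl _ hi1
    subst hi1j; exact hi1
  -- now u.1 i2 < c.1 i2 < succVal u.1 i2
  unfold succVal at hi2
  split at hi2
  · -- u i2 = 1, succ = 2 : c i2 strictly between 1 and 2, impossible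
    rename_i h1
    rw [h1] at huc
    rcases fin3cases (c.1 i2) with h | h | h <;> rw [h] at huc hi2 <;> revert huc hi2 <;> decide
  · rename_i h1
    split at hi2
    · -- succ = 2, u i2 ≠ 1 so u i2 = 0 (since < c), c i2 = 1
      rename_i h2
      obtain ⟨hj0, i0, hi0j, hi00⟩ := h2
      have hc1eq : c.1 i2 = 1 := by
        rcases fin3cases (c.1 i2) with h | h | h
        · rw [h] at huc; exact absurd huc (Fin.not_lt.mpr (Fin.zero_le _))
        · exact h
        · rw [h] at hi2; exact absurd hi2 (by decide)
      have hci0 : c.1 i0 = 0 := by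
        rw [hagree i0 (by intro hh; subst hh; exact lt_irrefl _ hi0j)]
        exact hi00
      exact c.2.2 i0 i2 hi0j hci0 hc1eq
    · -- succ = 1: u i2 < c i2 < 1 impossible
      rcases fin3cases (c.1 i2) with h | h | h
      · rw [h] at huc; exact absurd huc (Fin.not_lt.mpr (Fin.zero_le _))
      · rw [h] at hi2; exact absurd hi2 (by decide)
      · rw [h] at hi2; exact absurd hi2 (by decide)

lemma covBy_eq_succAt {n : ℕ} {u v : Triword n} (h : u ⋖ v) :
    ∃ j : Fin n, ∃ hj : canUp u.1 j, v = ⟨succAt u.1 j, succAt_tri u.2 hj⟩ := by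
  have hlt := h.1
  rw [← Subtype.coe_lt_coe, Pi.lt_def] at hlt
  have hle : u.1 ≤ v.1 := hlt.1
  have hne : u.1 ≠ v.1 := by
    intro hh
    obtain ⟨i, hi⟩ := hlt.2
    rw [hh] at hi; exact lt_irrefl _ hi
  set s : Finset (Fin n) := Finset.univ.filter (fun i => u.1 i ≠ v.1 i) with hs
  have hsne : s.Nonempty := by
    rw [Finset.filter_nonempty_iff]
    by_contra hh
    push_neg at hh
    exact hne (funext fun i => hh i (Finset.mem_univ i))
  set j := s.min' hsne with hjdef
  have hjmem : j ∈ s := s.min'_mem hsne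
  have hj1 : u.1 j ≠ v.1 j := (Finset.mem_filter.mp hjmem).2
  have hmin : ∀ i, i < j → u.1 i = v.1 i := by
    intro i hij
    by_contra hh
    exact absurd (s.min'_le i (Finset.mem_filter.mpr ⟨Finset.mem_univ i, hh⟩))
      (by rw [← hjdef]; exact Fin.not_le.mpr hij)
  have hjlt : u.1 j < v.1 j := lt_of_le_of_ne (hle j) hj1
  have hvj2 : u.1 j = 1 → v.1 j = 2 := by
    intro h1
    rcases fin3cases (v.1 j) with hh | hh | hh
    · rw [h1, hh] at hjlt; exact absurd hjlt (by decide)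
    · rw [h1, hh] at hjlt; exact absurd hjlt (by decide)
    · exact hh
  have hcan : canUp u.1 j := by
    by_cases h0 : (j : ℕ) = 0
    · left
      refine ⟨h0, ?_⟩
      rcases fin3cases (u.1 j) with hh | hh | hh
      · exact hh
      · exact absurd (hvj2 hh) (v.2.1 j h0)
      · rw [hh] at hjlt
        rcases fin3cases (v.1 j) with h2 | h2 | h2 <;> rw [h2] at hjlt <;>
          exact absurd hjlt (by decide)
    · right
      refine ⟨h0, fun hh => ?_⟩
      rw [hh] at hjlt
      rcases fin3cases (v.1 j) with h2 | h2 | h2 <;> rw [h2] at hjlt <;>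
        exact absurd hjlt (by decide)
  refine ⟨j, hcan, ?_⟩
  have hsle : succAt u.1 j ≤ v.1 := by
    intro i
    by_cases hij : i = j
    · subst hij
      rw [succAt_apply_self]
      unfold succVal
      split
      · rename_i h1; rw [hvj2 h1]
      · split
        · rename_i h2
          obtain ⟨hj0, i0, hi0j, hi00⟩ := h2
          rcases fin3cases (v.1 j) with h2 | h2 | h2
          · rw [h2] at hjlt; exact absurd hjlt (Fin.not_lt.mpr (Fin.zero_le _))
          · exfalso
            refine v.2.2 i0 j hi0j ?_ h2
            rw [← hmin i0 hi0j]; exact hi00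
          · rw [h2]
        · rcases fin3cases (v.1 j) with h2 | h2 | h2
          · rw [h2] at hjlt; exact absurd hjlt (Fin.not_lt.mpr (Fin.zero_le _))
          · rw [h2]
          · rw [h2]; exact (by decide : (1:Fin 3) ≤ 2)
    · rw [succAt_apply_ne u.1 hij]; exact hle i
  have hwlev : (⟨succAt u.1 j, succAt_tri u.2 hcan⟩ : Triword n) ≤ v :=
    Subtype.coe_le_coe.mp hsle
  rcases eq_or_lt_of_le hwlev with heq | hltw
  · exact heq.symm
  · exact absurd hltw (h.2 (covBy_succAt u hcan).1)

lemma card_covers {n : ℕ} (u : Triword n) :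
    Nat.card {v : Triword n // u ⋖ v} = outCount u.1 := by
  rw [outCount_eq_card, ← Nat.card_eq_fintype_card]
  refine (Nat.card_eq_of_bijective
    (fun j : {j : Fin n // canUp u.1 j} =>
      (⟨⟨succAt u.1 j.1, succAt_tri u.2 j.2⟩, covBy_succAt u j.2⟩ :
        {v : Triword n // u ⋖ v})) ⟨?_, ?_⟩).symm
  · intro j1 j2 hj
    have hfun : succAt u.1 j1.1 = succAt u.1 j2.1 := congrArg (fun z => z.1.1) hj
    by_contra hne
    have hne' : j1.1 ≠ j2.1 := fun hh => hne (Subtype.ext hh)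
    have h1 : succAt u.1 j1.1 j1.1 = succVal u.1 j1.1 := succAt_apply_self _ _
    rw [hfun, succAt_apply_ne u.1 hne'] at h1
    exact (ne_of_gt (lt_succVal j1.2)) h1.symm
  · rintro ⟨v, hv⟩
    obtain ⟨j, hj, heq⟩ := covBy_eq_succAt hv
    exact ⟨⟨j, hj⟩, by simp [heq]⟩

/- ## the counting part -/

noncomputable def Hpoly (n : ℕ) : ℤ[X] := ∑ u : Triword n, X ^ outCount u.1

noncomputable def Gpoly (n : ℕ) : ℤ[X] :=
  ∑ u : Triword n, if ∀ i, u.1 i ≠ 0 then X ^ outCount u.1 else 0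

/-- condition for extending a triword by one letter -/
def Allow (n : ℕ) (w : Triword n) (x : Fin 3) : Prop :=
  (x = 1 → ∀ i, w.1 i ≠ 0) ∧ (n = 0 → x ≠ 2)

instance (n : ℕ) (w : Triword n) : DecidablePred (Allow n w) := fun x => by
  unfold Allow; infer_instance

lemma snoc_tri {n : ℕ} (w : Triword n) {x : Fin 3} (hx : Allow n w x) :
    IsTriword (Fin.snoc w.1 x) := by
  constructor
  · intro i
    induction i using Fin.lastCases with
    | last =>
      intro hi0
      rw [Fin.snoc_last]
      exact hx.2 (by simpa using hi0)
    | cast i' =>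
      intro hi0
      rw [Fin.snoc_castSucc]
      exact w.2.1 i' (by simpa using hi0)
  · intro i j hij hi hj
    induction j using Fin.lastCases with
    | last =>
      rw [Fin.snoc_last] at hj
      induction i using Fin.lastCases with
      | last => exact absurd hij (lt_irrefl _)
      | cast i' =>
        rw [Fin.snoc_castSucc] at hi
        exact hx.1 hj i' hi
    | cast j' =>
      rw [Fin.snoc_castSucc] at hj
      induction i using Fin.lastCases with
      | last => exact absurd hij (Fin.not_lt.mpr (Fin.le_last _))
      | cast i' =>
        rw [Fin.snoc_castSucc] at hi
        exact w.2.2 i' j' (Fin.castSucc_lt_castSucc_iff.mp hij) hi hj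

lemma tri_init {n : ℕ} (u : Triword (n+1)) : IsTriword (Fin.init u.1) := by
  constructor
  · intro i hi0
    exact u.2.1 i.castSucc (by simpa using hi0)
  · intro i j hij hi hj
    exact u.2.2 i.castSucc j.castSucc (Fin.castSucc_lt_castSucc_iff.mpr hij) hi hj

lemma allow_last {n : ℕ} (u : Triword (n+1)) :
    Allow n ⟨Fin.init u.1, tri_init u⟩ (u.1 (Fin.last n)) := by
  constructor
  · intro h1 i hi
    exact u.2.2 i.castSucc (Fin.last n) (Fin.castSucc_lt_last i) hi h1
  · intro h0
    exact u.2.1 (Fin.last n) (by simp [h0])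

lemma outCount_snoc {n : ℕ} (w : Fin n → Fin 3) (x : Fin 3) :
    outCount (Fin.snoc w x : Fin (n+1) → Fin 3) = outCount w + cf (n+1) (Fin.last n) x := by
  unfold outCount
  rw [Fin.sum_univ_castSucc]
  congr 1
  · refine Finset.sum_congr rfl fun j _ => ?_
    rw [Fin.snoc_castSucc]
    unfold cf
    rw [Fin.coe_castSucc]
  · rw [Fin.snoc_last]

lemma nozero_snoc {n : ℕ} (w : Fin n → Fin 3) (x : Fin 3) :
    (∀ i, (Fin.snoc w x : Fin (n+1) → Fin 3) i ≠ 0) ↔ ((∀ i, w i ≠ 0) ∧ x ≠ 0) := by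
  constructor
  · intro h
    exact ⟨fun i => by have := h i.castSucc; rwa [Fin.snoc_castSucc] at this,
      by have := h (Fin.last n); rwa [Fin.snoc_last] at this⟩
  · rintro ⟨h1, h2⟩ i
    induction i using Fin.lastCases with
    | last => rwa [Fin.snoc_last]
    | cast i' => rw [Fin.snoc_castSucc]; exact h1 i'

lemma sum_ext {n : ℕ} (F : (Fin (n+1) → Fin 3) → ℤ[X]) :
    (∑ u : Triword (n+1), F u.1) =
      ∑ w : Triword n, ∑ x : Fin 3,
        if Allow n w x then F (Fin.snoc w.1 x) else 0 := by
  have step1 : (∑ u : Triword (n+1), F u.1) =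
      ∑ p : (Σ w : Triword n, {x : Fin 3 // Allow n w x}), F (Fin.snoc p.1.1 p.2.1) := by
    refine (Fintype.sum_bijective
      (fun p : (Σ w : Triword n, {x : Fin 3 // Allow n w x}) =>
        (⟨Fin.snoc p.1.1 p.2.1, snoc_tri p.1 p.2.2⟩ : Triword (n+1)))
      ⟨?_, ?_⟩ _ _ (fun p => rfl)).symm
    · rintro ⟨w1, x1⟩ ⟨w2, x2⟩ h
      have h' : (Fin.snoc w1.1 x1.1 : Fin (n+1) → Fin 3) = Fin.snoc w2.1 x2.1 := by exact congrArg Subtype.val h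
      have hw : w1 = w2 := Subtype.ext (by
        have := congrArg Fin.init h'
        rwa [Fin.init_snoc, Fin.init_snoc] at this)
      subst hw
      have hx : x1 = x2 := Subtype.ext (by
        have := congrArg (fun z => z (Fin.last n)) h'
        simpa [Fin.snoc_last] using this)
      rw [hx]
    · intro u
      exact ⟨⟨⟨Fin.init u.1, tri_init u⟩, ⟨u.1 (Fin.last n), allow_last u⟩⟩,
        Subtype.ext (Fin.snoc_init_self u.1)⟩
  rw [step1, ← Finset.univ_sigma_univ, Finset.sum_sigma]
  refine Finset.sum_congr rfl fun w _ => ?_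
  rw [← Finset.sum_filter]
  exact (Finset.sum_subtype _ (by intro x; simp) (fun x => F (Fin.snoc w.1 x))).symm

lemma cf_last {n : ℕ} (hn : 1 ≤ n) (x : Fin 3) :
    cf (n+1) (Fin.last n) x = if x = 2 then 0 else 1 := by
  unfold cf
  rw [if_neg (by simp; omega)]

lemma Hrec (n : ℕ) (hn : 1 ≤ n) :
    Hpoly (n+1) = (X + 1) * Hpoly n + X * Gpoly n := by
  unfold Hpoly
  rw [sum_ext (fun u => (X : ℤ[X]) ^ outCount u)]
  have key : ∀ w : Triword n,
      (∑ x : Fin 3, if Allow n w x then (X : ℤ[X]) ^ outCount (Fin.snoc w.1 x) else 0)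
      = (X + 1) * X ^ outCount w.1 +
        X * (if (∀ i, w.1 i ≠ 0) then (X : ℤ[X]) ^ outCount w.1 else 0) := by
    intro w
    rw [Fin.sum_univ_three]
    have hA0 : Allow n w 0 := ⟨fun h => absurd h (by decide), fun h => absurd h (by omega)⟩
    have hA2 : Allow n w 2 := ⟨fun h => absurd h (by decide), fun h => absurd h (by omega)⟩
    rw [if_pos hA0, if_pos hA2]
    by_cases hz : ∀ i, w.1 i ≠ 0
    · have hA1 : Allow n w 1 := ⟨fun _ => hz, fun h => absurd h (by omega)⟩
      rw [if_pos hA1, if_pos hz]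
      simp only [outCount_snoc, cf_last hn,
        if_neg (show ¬(0:Fin 3) = 2 by decide), if_neg (show ¬(1:Fin 3) = 2 by decide),
        if_pos (show (2:Fin 3) = 2 from rfl), ite_true, ite_false]
      ring
    · rw [if_neg (fun (hA : Allow n w 1) => hz (hA.1 rfl)), if_neg hz]
      simp only [outCount_snoc, cf_last hn,
        if_neg (show ¬(0:Fin 3) = 2 by decide),
        if_pos (show (2:Fin 3) = 2 from rfl), ite_true, ite_false]
      ring
  rw [Finset.sum_congr rfl (fun w _ => key w), Finset.sum_add_distrib,
    ← Finset.mul_sum, ← Finset.mul_sum]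
  rfl

lemma Grec (n : ℕ) (hn : 1 ≤ n) : Gpoly (n+1) = (X + 1) * Gpoly n := by
  unfold Gpoly
  rw [sum_ext (fun u => if ∀ i, u i ≠ 0 then (X : ℤ[X]) ^ outCount u else 0)]
  have key : ∀ w : Triword n,
      (∑ x : Fin 3, if Allow n w x then
          (if ∀ i, (Fin.snoc w.1 x : Fin (n+1) → Fin 3) i ≠ 0 then
            (X : ℤ[X]) ^ outCount (Fin.snoc w.1 x) else 0) else 0)
      = (X + 1) * (if (∀ i, w.1 i ≠ 0) then (X : ℤ[X]) ^ outCount w.1 else 0) := by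
    intro w
    rw [Fin.sum_univ_three]
    have hA0 : Allow n w 0 := ⟨fun h => absurd h (by decide), fun h => absurd h (by omega)⟩
    have hA2 : Allow n w 2 := ⟨fun h => absurd h (by decide), fun h => absurd h (by omega)⟩
    rw [if_pos hA0, if_pos hA2]
    rw [if_neg (fun hh => ((nozero_snoc w.1 0).mp hh).2 rfl)]
    by_cases hz : ∀ i, w.1 i ≠ 0
    · have hA1 : Allow n w 1 := ⟨fun _ => hz, fun h => absurd h (by omega)⟩
      rw [if_pos hA1]
      rw [if_pos ((nozero_snoc w.1 1).mpr ⟨hz, by decide⟩),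
        if_pos ((nozero_snoc w.1 2).mpr ⟨hz, by decide⟩), if_pos hz]
      simp only [outCount_snoc, cf_last hn,
        if_neg (show ¬(1:Fin 3) = 2 by decide), if_pos (show (2:Fin 3) = 2 from rfl), ite_true, ite_false]
      ring
    · rw [if_neg (fun (hA : Allow n w 1) => hz (hA.1 rfl)),
        if_neg (fun hh => hz ((nozero_snoc w.1 2).mp hh).1), if_neg hz]
      ring
  rw [Finset.sum_congr rfl (fun w _ => key w), ← Finset.mul_sum]

instance : Unique (Triword 0) where
  default := ⟨Fin.elim0, by constructor <;> intro i <;> exact i.elim0⟩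
  uniq u := by
    apply Subtype.ext; funext i; exact i.elim0

lemma outCount_zero (w : Triword 0) : outCount w.1 = 0 := by
  unfold outCount
  simp

lemma cf_one (x : Fin 3) : cf (0+1) (Fin.last 0) x = if x = 0 then 1 else 0 := by
  unfold cf
  rw [if_pos (by simp)]

lemma H1 : Hpoly 1 = X + 1 := by
  unfold Hpoly
  rw [sum_ext (fun u => (X : ℤ[X]) ^ outCount u), Fintype.sum_unique, Fin.sum_univ_three]
  have hA0 : Allow 0 default 0 := ⟨fun h => absurd h (by decide), fun _ => by decide⟩
  have hA1 : Allow 0 default 1 := ⟨fun _ i => i.elim0, fun _ => by decide⟩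
  rw [if_pos hA0, if_pos hA1, if_neg (fun (hA : Allow 0 default 2) => hA.2 rfl rfl)]
  simp only [outCount_snoc, outCount_zero, cf_one,
    if_pos (show (0:Fin 3) = 0 from rfl), if_neg (show ¬(1:Fin 3) = 0 by decide), ite_true, ite_false]
  ring

lemma G1 : Gpoly 1 = 1 := by
  unfold Gpoly
  rw [sum_ext (fun u => if ∀ i, u i ≠ 0 then (X : ℤ[X]) ^ outCount u else 0),
    Fintype.sum_unique, Fin.sum_univ_three]
  have hA0 : Allow 0 default 0 := ⟨fun h => absurd h (by decide), fun _ => by decide⟩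
  have hA1 : Allow 0 default 1 := ⟨fun _ i => i.elim0, fun _ => by decide⟩
  rw [if_pos hA0, if_pos hA1, if_neg (fun (hA : Allow 0 default 2) => hA.2 rfl rfl)]
  rw [if_neg (fun hh => ((nozero_snoc _ 0).mp hh).2 rfl)]
  rw [if_pos ((nozero_snoc _ 1).mpr ⟨fun i => i.elim0, by decide⟩)]
  simp only [outCount_snoc, outCount_zero, cf_one, if_neg (show ¬(1:Fin 3) = 0 by decide)]
  ring

lemma Gval (n : ℕ) (hn : 1 ≤ n) : Gpoly n = (X + 1) ^ (n - 1) := by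
  induction n, hn using Nat.le_induction with
  | base => simpa using G1
  | succ m hm ih =>
    rw [Grec m hm, ih]
    rw [show m + 1 - 1 = (m - 1) + 1 by omega, pow_succ]
    ring

lemma Hval (n : ℕ) (hn : 2 ≤ n) :
    Hpoly n = (X + 1) ^ (n - 2) * (X ^ 2 + ((n : ℤ[X]) + 1) * X + 1) := by
  induction n, hn using Nat.le_induction with
  | base =>
    rw [Hrec 1 le_rfl, H1, G1]
    push_cast
    ring
  | succ m hm ih =>
    rw [Hrec m (by omega), ih, Gval m (by omega)]
    obtain ⟨k, rfl⟩ : ∃ k, m = k + 2 := ⟨m - 2, by omega⟩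
    simp only [show k + 2 + 1 - 2 = k + 1 by omega, show k + 2 - 2 = k by omega,
      show k + 2 - 1 = k + 1 by omega]
    push_cast
    ring

/-- The h-polynomial `∑_u y^(out u)` of the Hochschild lattice of size `n ≥ 2`
equals `(y+1)^(n-2) (y² + (n+1) y + 1)`. -/
theorem h_polynomial (n : ℕ) (hn : 2 ≤ n) :
    (∑ u : Triword n, (X : ℤ[X]) ^ Nat.card {v : Triword n // u ⋖ v}) =
      (X + 1) ^ (n - 2) * (X ^ 2 + ((n : ℤ[X]) + 1) * X + 1) := by
  rw [← Hval n hn]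
  exact Finset.sum_congr rfl fun u _ => by rw [card_covers]
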